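/- arXiv:0911.3537 — 6 statements merged into one kernel-verified Lean document; each statement's English description precedes it below -/
import Mathlib

section
/- For positive real numbers x and y, the supremum over s ∈ [0,1] of c(s)·x^s·y^{1-s}, where c(s) = s^{-s}(1-s)^{-(1-s)} (with the convention 0^0 = 1), equals x + y. -/
open Real

/-! Writing `c(s) x^s y^(1-s) = (x/s)^s (y/(1-s))^(1-s)`, weighted AM-GM with weights `s, 1 - s`
bounds it by `s (x/s) + (1-s) (y/(1-s)) = x + y`, with equality when `x/s = y/(1-s)`,
i.e. at `s = x/(x+y)`. -/

noncomputable def entropyTerm (x y s : ℝ) : ℝ :=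
  s ^ (-s) * (1 - s) ^ (-(1 - s)) * x ^ s * y ^ (1 - s)

lemma div_rpow_self_eq {x s : ℝ} (hx : 0 ≤ x) (hs : 0 ≤ s) :
    (x / s) ^ s = s ^ (-s) * x ^ s := by
  rw [div_rpow hx hs, rpow_neg hs, div_eq_inv_mul]

-- The endpoints need no case split: the junk value `x / 0 = 0` is harmless as `0 ^ 0 = 1`.
lemma entropyTerm_eq_div_rpow_mul {x y s : ℝ} (hx : 0 ≤ x) (hy : 0 ≤ y) (hs₀ : 0 ≤ s)
    (hs₁ : s ≤ 1) : entropyTerm x y s = (x / s) ^ s * (y / (1 - s)) ^ (1 - s) := by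
  rw [div_rpow_self_eq hx hs₀, div_rpow_self_eq hy (sub_nonneg.2 hs₁), entropyTerm]
  ring

lemma mul_div_le_self {K : Type*} [Field K] [LinearOrder K] {a b : K} (ha : 0 ≤ a) : b * (a / b) ≤ a := by
  rcases eq_or_ne b 0 with rfl | hb
  · simpa using ha
  · rw [mul_div_cancel₀ a hb]

lemma entropyTerm_le_add {x y s : ℝ} (hx : 0 ≤ x) (hy : 0 ≤ y)
    (hs : s ∈ Set.Icc (0 : ℝ) 1) :
    entropyTerm x y s ≤ x + y := by
  obtain ⟨hs₀, hs₁⟩ := hs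
  have hs₁' : 0 ≤ 1 - s := sub_nonneg.2 hs₁
  calc entropyTerm x y s = (x / s) ^ s * (y / (1 - s)) ^ (1 - s) :=
        entropyTerm_eq_div_rpow_mul hx hy hs₀ hs₁
    _ ≤ s * (x / s) + (1 - s) * (y / (1 - s)) :=
        geom_mean_le_arith_mean2_weighted hs₀ hs₁' (div_nonneg hx hs₀) (div_nonneg hy hs₁')
          (add_sub_cancel s 1)
    _ ≤ x + y := add_le_add (mul_div_le_self hx) (mul_div_le_self hy)

lemma div_add_mem_Icc {x y : ℝ} (hx : 0 ≤ x) (hy : 0 ≤ y) :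
    x / (x + y) ∈ Set.Icc (0 : ℝ) 1 :=
  ⟨div_nonneg hx (add_nonneg hx hy),
    div_le_one_of_le₀ (le_add_of_nonneg_right hy) (add_nonneg hx hy)⟩

lemma entropyTerm_div_add {x y : ℝ} (hx : 0 < x) (hy : 0 < y) :
    entropyTerm x y (x / (x + y)) = x + y := by
  have hxy : 0 < x + y := add_pos hx hy
  have h_one_sub : 1 - x / (x + y) = y / (x + y) := by field_simp; ring
  obtain ⟨hs₀, hs₁⟩ := div_add_mem_Icc hx.le hy.le
  rw [entropyTerm_eq_div_rpow_mul hx.le hy.le hs₀ hs₁, h_one_sub, div_div_cancel₀ hx.ne',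
    div_div_cancel₀ hy.ne', ← rpow_add hxy, ← add_div, div_self hxy.ne', rpow_one]

lemma isGreatest_entropyTerm {x y : ℝ} (hx : 0 < x) (hy : 0 < y) :
    IsGreatest (entropyTerm x y '' Set.Icc 0 1) (x + y) := by
  refine ⟨⟨x / (x + y), div_add_mem_Icc hx.le hy.le, entropyTerm_div_add hx hy⟩, ?_⟩
  rintro _ ⟨s, hs, rfl⟩
  exact entropyTerm_le_add hx.le hy.le hs

theorem entropy_sup_eq_add (x y : ℝ) (hx : 0 < x) (hy : 0 < y) :
    sSup ((fun s : ℝ => s ^ (-s) * (1 - s) ^ (-(1 - s)) * x ^ s * y ^ (1 - s)) ''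
        Set.Icc (0 : ℝ) 1) = x + y :=
  (isGreatest_entropyTerm hx hy).csSup_eq
end

section
/- The function c(s) = s^{-s}(1-s)^{-(1-s)} on (0,1) satisfies the functional equation c(u)·c(v)^u = c(uv)·c(w)^{1-uv} where w = u(1-v)/(1-uv), for all u, v ∈ (0,1). -/
/-!
Writing `c(s) = exp (H s)` with `H` the binary entropy, the identity is the chain rule of entropy
for the three-point distribution `(uv, u(1 - v), 1 - u)`: grouping its first two outcomes gives
`H(u) + u H(v)`, grouping its last two gives `H(uv) + (1 - uv) H(w)`.
-/

open Real

lemma rpow_neg_mul_one_sub_rpow_neg_eq_exp_binEntropy {s : ℝ} (hs₀ : 0 < s) (hs₁ : s < 1) :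
    s ^ (-s) * (1 - s) ^ (-(1 - s)) = exp (binEntropy s) := by
  rw [rpow_def_of_pos hs₀, rpow_def_of_pos (sub_pos.mpr hs₁), ← exp_add, binEntropy, log_inv,
    log_inv]
  ring_nf

lemma binEntropy_add_mul_binEntropy_eq {u v : ℝ} (hu₀ : 0 < u) (hu₁ : u < 1) (hv₀ : 0 < v)
    (hv₁ : v < 1) :
    binEntropy u + u * binEntropy v =
      binEntropy (u * v) + (1 - u * v) * binEntropy (u * (1 - v) / (1 - u * v)) := by
  have huv : 0 < 1 - u * v := by nlinarith
  have hw : 1 - u * (1 - v) / (1 - u * v) = (1 - u) / (1 - u * v) := by field_simp; ring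
  simp only [binEntropy, log_inv, hw]
  rw [log_mul hu₀.ne' hv₀.ne', log_div (by positivity) huv.ne', log_div (by linarith) huv.ne',
    log_mul hu₀.ne' (by linarith)]
  field_simp
  ring

theorem entropy_functional_equation (u v : ℝ) (hu : u ∈ Set.Ioo (0 : ℝ) 1)
    (hv : v ∈ Set.Ioo (0 : ℝ) 1) :
    (u ^ (-u) * (1 - u) ^ (-(1 - u))) * (v ^ (-v) * (1 - v) ^ (-(1 - v))) ^ u =
      ((u * v) ^ (-(u * v)) * (1 - u * v) ^ (-(1 - u * v))) *
        ((u * (1 - v) / (1 - u * v)) ^ (-(u * (1 - v) / (1 - u * v))) *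
          (1 - u * (1 - v) / (1 - u * v)) ^ (-(1 - u * (1 - v) / (1 - u * v)))) ^ (1 - u * v) := by
  obtain ⟨hu₀, hu₁⟩ := hu
  obtain ⟨hv₀, hv₁⟩ := hv
  have huv : 0 < 1 - u * v := by nlinarith
  have hw₀ : 0 < u * (1 - v) / (1 - u * v) := by have := sub_pos.mpr hv₁; positivity
  have hw₁ : u * (1 - v) / (1 - u * v) < 1 := by rw [div_lt_one huv]; linarith
  simp only [rpow_neg_mul_one_sub_rpow_neg_eq_exp_binEntropy, hu₀, hu₁, hv₀, hv₁,
    mul_pos hu₀ hv₀, mul_lt_one_of_nonneg_of_lt_one_left hu₀.le hu₁ hv₁.le, hw₀, hw₁,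
    ← exp_mul, ← exp_add]
  rw [mul_comm _ u, mul_comm _ (1 - u * v), binEntropy_add_mul_binEntropy_eq hu₀ hu₁ hv₀ hv₁]
end

section
/- Let H be an abelian group and let K = H ∪ {0} be the monoid obtained by adjoining an absorbing zero. Suppose s : K → K is a bijection with s(0) = 1 (the identity of H) that commutes with all its conjugates under multiplication by elements of H, i.e. s(x·s(y·x⁻¹)) = x·s(s(y)·x⁻¹) for all x ∈ H, y ∈ K. Then the operation x + y defined by x + y = y if x = 0 and x + y = x·s(y·x⁻¹) if x ≠ 0 is commutative and associative with neutral element 0, every element has an additive inverse, and multiplication distributes over it; hence K becomes a field. -/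
/-!
Write `x + y = x · s(y / x)`. Homogeneity `a(x + y) = ax + ay` is built into this formula, and
the commutation hypothesis says exactly that `s(x + y) = x + s y`. Together with `s 0 = 1` this
gives `s y = y + 1`, from which commutativity follows by homogeneity, and then
`s(x + y) = s x + y`, which is associativity after scaling by `x⁻¹`. Additive inverses exist
because `s` takes the value `0`.
-/

section

variable {K : Type*} [CommGroupWithZero K]

open Classical in
noncomputable def symAdd (s : K → K) (x y : K) : K :=
  if x = 0 then y else x * s (y / x)

/-- The conjugate of `s` by `x ≠ 0` is `y ↦ x · s(y / x)`. -/
def CommutesWithConjugates (s : K → K) : Prop :=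
  ∀ x : K, x ≠ 0 → ∀ y, s (x * s (y / x)) = x * s (s y / x)

variable {s : K → K}

@[simp]
theorem symAdd_zero_left (y : K) : symAdd s 0 y = y := by
  simp [symAdd]

theorem symAdd_of_ne_zero {x : K} (hx : x ≠ 0) (y : K) : symAdd s x y = x * s (y / x) := by
  simp [symAdd, hx]

theorem symAdd_zero_right (h0 : s 0 = 1) (x : K) : symAdd s x 0 = x := by
  rcases eq_or_ne x 0 with rfl | hx
  · exact symAdd_zero_left 0
  · rw [symAdd_of_ne_zero hx, zero_div, h0, mul_one]

theorem mul_symAdd_mul (a x y : K) : symAdd s (a * x) (a * y) = a * symAdd s x y := by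
  rcases eq_or_ne a 0 with rfl | ha
  · simp
  rcases eq_or_ne x 0 with rfl | hx
  · simp
  rw [symAdd_of_ne_zero (mul_ne_zero ha hx), symAdd_of_ne_zero hx, mul_div_mul_left y x ha,
    mul_assoc]

theorem symAdd_div_div (a x y : K) : symAdd s (x / a) (y / a) = symAdd s x y / a := by
  simp only [div_eq_inv_mul, mul_symAdd_mul]

theorem map_symAdd_eq_symAdd_map (hcomm : CommutesWithConjugates s) (x y : K) :
    s (symAdd s x y) = symAdd s x (s y) := by
  rcases eq_or_ne x 0 with rfl | hx
  · simp
  · rw [symAdd_of_ne_zero hx, symAdd_of_ne_zero hx, hcomm x hx]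

theorem eq_symAdd_one (h0 : s 0 = 1) (hcomm : CommutesWithConjugates s) (y : K) :
    s y = symAdd s y 1 := by
  conv_lhs => rw [← symAdd_zero_right h0 y]
  rw [map_symAdd_eq_symAdd_map hcomm, h0]

theorem symAdd_comm (h0 : s 0 = 1) (hcomm : CommutesWithConjugates s) (x y : K) :
    symAdd s x y = symAdd s y x := by
  rcases eq_or_ne x 0 with rfl | hx
  · rw [symAdd_zero_left, symAdd_zero_right h0]
  · calc symAdd s x y = x * symAdd s (y / x) 1 := by
          rw [symAdd_of_ne_zero hx, eq_symAdd_one h0 hcomm]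
      _ = symAdd s y x := by rw [← mul_symAdd_mul, mul_div_cancel₀ y hx, mul_one]

theorem map_symAdd_eq_map_symAdd (h0 : s 0 = 1) (hcomm : CommutesWithConjugates s) (x y : K) :
    s (symAdd s x y) = symAdd s (s x) y := by
  rw [symAdd_comm h0 hcomm, map_symAdd_eq_symAdd_map hcomm, symAdd_comm h0 hcomm]

theorem symAdd_assoc (h0 : s 0 = 1) (hcomm : CommutesWithConjugates s) (x y z : K) :
    symAdd s (symAdd s x y) z = symAdd s x (symAdd s y z) := by
  rcases eq_or_ne x 0 with rfl | hx
  · simp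
  · calc symAdd s (symAdd s x y) z = symAdd s (x * s (y / x)) (x * (z / x)) := by
          rw [symAdd_of_ne_zero hx, mul_div_cancel₀ z hx]
      _ = x * s (symAdd s (y / x) (z / x)) := by
          rw [mul_symAdd_mul, map_symAdd_eq_map_symAdd h0 hcomm]
      _ = symAdd s x (symAdd s y z) := by rw [symAdd_div_div, symAdd_of_ne_zero hx]

theorem exists_symAdd_eq_zero (hs : Function.Surjective s) (x : K) :
    ∃ y, symAdd s x y = 0 := by
  rcases eq_or_ne x 0 with rfl | hx
  · exact ⟨0, symAdd_zero_left 0⟩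
  · obtain ⟨e, he⟩ := hs 0
    exact ⟨x * e, by rw [symAdd_of_ne_zero hx, mul_div_cancel_left₀ e hx, he, mul_zero]⟩

theorem commutesWithConjugates_iff {H : Type*} [CommGroup H] (s : WithZero H → WithZero H) :
    CommutesWithConjugates s ↔ ∀ (x : H) (y : WithZero H),
      s ((x : WithZero H) * s (y * (x : WithZero H)⁻¹)) =
        (x : WithZero H) * s (s y * (x : WithZero H)⁻¹) := by
  simp only [CommutesWithConjugates, WithZero.ne_zero_iff_exists, div_eq_mul_inv]
  constructor
  · exact fun h x => h x ⟨x, rfl⟩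
  · rintro h _ ⟨x, rfl⟩
    exact h x

end

/-- Theorem 2.2 (thmsym): a bijection `s` of `K = H ∪ {0}` with `s 0 = 1` commuting with
its conjugates under multiplication by elements of `H` defines a field structure on `K`. -/
theorem symmetry_gives_field {H : Type*} [CommGroup H] (s : WithZero H → WithZero H)
    (hbij : Function.Bijective s) (h0 : s 0 = 1)
    (hcomm : ∀ (x : H) (y : WithZero H),
      s ((x : WithZero H) * s (y * (x : WithZero H)⁻¹)) =
        (x : WithZero H) * s (s y * (x : WithZero H)⁻¹))
    (A : WithZero H → WithZero H → WithZero H)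
    (hA0 : ∀ y, A 0 y = y)
    (hA : ∀ x y, x ≠ 0 → A x y = x * s (y * x⁻¹)) :
    (∀ x y, A x y = A y x) ∧
    (∀ x y z, A (A x y) z = A x (A y z)) ∧
    (∀ x, A x 0 = x) ∧
    (∀ x, ∃ y, A x y = 0) ∧
    (∀ a x y, A (a * x) (a * y) = a * A x y) := by
  have hconj : CommutesWithConjugates s := (commutesWithConjugates_iff s).2 hcomm
  obtain rfl : A = symAdd s := by
    funext x y
    rcases eq_or_ne x 0 with rfl | hx
    · rw [hA0, symAdd_zero_left]
    · rw [hA x y hx, symAdd_of_ne_zero hx, div_eq_mul_inv]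
  exact ⟨symAdd_comm h0 hconj, symAdd_assoc h0 hconj, symAdd_zero_right h0,
    exists_symAdd_eq_zero hbij.2, mul_symAdd_mul⟩
end

section
/- Let R be a commutative semiring of characteristic one (1 + 1 = 1) that is multiplicatively cancellative (multiplication by any nonzero element is injective). Then for every natural number n ≥ 1 the map x ↦ x^n is an injective semiring endomorphism of R; in particular (x + y)^n = x^n + y^n for all x, y ∈ R. -/
/-!
Since `1 + 1 = 1`, addition is idempotent, so `R` is an idempotent semiring ordered by
`a ≤ b ↔ a + b = b`, in which finite sums are suprema; cancellation makes multiplication by a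
nonzero element an order embedding. Every monomial of degree `2n` in `x, y` is divisible by
`x ^ n` or by `y ^ n`, so `(x + y) ^ n * (x + y) ^ n ≤ (x + y) ^ n * (x ^ n + y ^ n)`; cancelling
gives `(x + y) ^ n ≤ x ^ n + y ^ n`, and the reverse inequality is monotonicity. For injectivity,
`x ^ n = y ^ n` forces `(x + y) ^ n = x ^ n`, and then `x ≤ x + y` with equal `n`-th powers
forces `x = x + y`; likewise `y = x + y`.
-/

open Finset

section IdemCommSemiring

variable {α : Type*} [IdemCommSemiring α]

theorem add_pow_eq_sum_antidiagonal (x y : α) (n : ℕ) :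
    (x + y) ^ n = ∑ p ∈ antidiagonal n, x ^ p.1 * y ^ p.2 := by
  rw [(Commute.all x y).add_pow']
  refine sum_congr rfl fun p hp => nsmul_eq_self ?_ _
  exact (Nat.choose_pos (HasAntidiagonal.antidiagonal.fst_le hp)).ne'

theorem pow_mul_pow_le_add_pow (x y : α) (i j : ℕ) : x ^ i * y ^ j ≤ (x + y) ^ (i + j) := by
  rw [pow_add]
  gcongr
  · exact le_self_add
  · exact le_add_self

theorem pow_mul_pow_le_pow_mul_add_pow {x y : α} {a b i j : ℕ} (hai : a ≤ i)
    (hij : i + j = a + b) : x ^ i * y ^ j ≤ x ^ a * (x + y) ^ b := by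
  obtain ⟨k, rfl⟩ := Nat.exists_eq_add_of_le hai
  rw [pow_add, mul_assoc, show b = k + j by omega]
  gcongr
  exact pow_mul_pow_le_add_pow x y k j

theorem add_pow_add_le (x y : α) (a b : ℕ) :
    (x + y) ^ (a + b) ≤ x ^ a * (x + y) ^ b + y ^ b * (x + y) ^ a := by
  rw [add_pow_eq_sum_antidiagonal]
  refine sum_induction _ (· ≤ _) (fun _ _ => add_le) zero_le fun p hp => ?_
  rw [HasAntidiagonal.mem_antidiagonal] at hp
  rcases le_total a p.1 with ha | hb
  · exact le_add_right (pow_mul_pow_le_pow_mul_add_pow ha hp)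
  · refine le_add_left ?_
    rw [mul_comm, add_comm x]
    exact pow_mul_pow_le_pow_mul_add_pow (by omega) (by omega)

variable [IsLeftCancelMulZero α]

theorem le_of_mul_le_mul_left_of_ne_zero {a b c : α} (h : c * a ≤ c * b) (hc : c ≠ 0) :
    a ≤ b := by
  rw [← add_eq_right_iff_le] at h ⊢
  exact mul_left_cancel₀ hc (by rw [mul_add, h])

theorem add_pow_idem (x y : α) (n : ℕ) : (x + y) ^ n = x ^ n + y ^ n := by
  refine le_antisymm ?_ (add_le (by gcongr; exact le_self_add) (by gcongr; exact le_add_self))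
  rcases eq_or_ne ((x + y) ^ n) 0 with h | h
  · exact h ▸ zero_le
  refine le_of_mul_le_mul_left_of_ne_zero ?_ h
  calc (x + y) ^ n * (x + y) ^ n = (x + y) ^ (n + n) := (pow_add _ _ _).symm
    _ ≤ x ^ n * (x + y) ^ n + y ^ n * (x + y) ^ n := add_pow_add_le x y n n
    _ = (x + y) ^ n * (x ^ n + y ^ n) := by ring

theorem eq_of_le_of_pow_eq {a b : α} {n : ℕ} (hab : a ≤ b) (hpow : a ^ n = b ^ n)
    (hn : n ≠ 0) : a = b := by
  obtain ⟨m, rfl⟩ := Nat.exists_eq_succ_of_ne_zero hn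
  refine le_antisymm hab ?_
  rcases eq_or_ne (b ^ m) 0 with h | h
  · exact eq_zero_of_pow_eq_zero h ▸ zero_le
  refine le_of_mul_le_mul_left_of_ne_zero ?_ h
  calc b ^ m * b = a ^ m * a := by rw [← pow_succ, ← pow_succ, hpow]
    _ ≤ b ^ m * a := by gcongr

theorem pow_left_injective_idem {n : ℕ} (hn : n ≠ 0) :
    Function.Injective (fun x : α => x ^ n) := by
  intro x y (h : x ^ n = y ^ n)
  have hx : x = x + y := eq_of_le_of_pow_eq le_self_add (by rw [add_pow_idem, h, add_idem]) hn
  have hy : y = x + y := eq_of_le_of_pow_eq le_add_self (by rw [add_pow_idem, h, add_idem]) hn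
  exact hx.trans hy.symm

end IdemCommSemiring

theorem frobenius_char_one {R : Type*} [CommSemiring R] (hchar : (1 : R) + 1 = 1)
    (hcanc : ∀ r : R, r ≠ 0 → Function.Injective (fun x : R => r * x)) :
    ∀ n : ℕ, 1 ≤ n →
      Function.Injective (fun x : R => x ^ n) ∧
      (∀ x y : R, (x + y) ^ n = x ^ n + y ^ n) ∧
      (∀ x y : R, (x * y) ^ n = x ^ n * y ^ n) ∧
      (1 : R) ^ n = 1 := by
  intro n hn
  have add_self (a : R) : a + a = a := by rw [← mul_one a, ← mul_add, hchar]
  let _ : IdemCommSemiring R := { ‹CommSemiring R›, IdemSemiring.ofSemiring add_self with }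
  have : IsLeftCancelMulZero R := ⟨hcanc _⟩
  exact ⟨pow_left_injective_idem (by omega), fun x y => add_pow_idem x y n,
    fun x y => mul_pow x y n, one_pow n⟩
end

section
/- Let B(n,i) with n ≥ 2 and 1 ≤ i ≤ n-1 be the semiring on {0,1,…,n-1} where x +' y = x+y if x+y ≤ n-1 and otherwise the unique ℓ with i ≤ ℓ ≤ n-1 congruent to x+y modulo m = n-i (similarly for multiplication). If B(n,i) is a semifield (every nonzero element invertible) then n = 2 and i = 1. -/
/-!
If `n ≥ 3`, the element `n - 1` has no inverse. Its multiples `(n - 1) * y` with `y ≥ 2` leave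
`{0, …, n - 1}` and are reduced to `i + ((n - 1) * y - i) % (n - i)`; this equals `1` only when
`i = 1` and `n - 1 ∣ (n - 1) * y - 1`, which forces `n - 1 = 1`.
-/

theorem Nat.eq_one_of_dvd_mul_sub_one {a y : ℕ} (hpos : 0 < a * y) (h : a ∣ a * y - 1) :
    a = 1 :=
  Nat.dvd_one.mp <| (Nat.dvd_sub_iff_right hpos (dvd_mul_right a y)).mp h

theorem Nat.eq_one_and_dvd_sub_one_of_add_sub_mod_eq_one {i k m : ℕ} (hi : 1 ≤ i)
    (hik : i ≤ k) (h : i + (k - i) % m = 1) :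
    i = 1 ∧ m ∣ k - 1 := by
  obtain rfl : i = 1 := by omega
  exact ⟨rfl, Nat.dvd_of_mod_eq_zero (by omega)⟩

theorem Bni_semifield_general (n i : ℕ) (hi1 : 1 ≤ i) (hi2 : i ≤ n - 1)
    (π : ℕ → ℕ) (hπ : ∀ k, π k = if k ≤ n - 1 then k else i + (k - i) % (n - i))
    (hinv : ∀ x, 1 ≤ x → x ≤ n - 1 → ∃ y, 1 ≤ y ∧ y ≤ n - 1 ∧ π (x * y) = 1) :
    n = 2 ∧ i = 1 := by
  suffices n ≤ 2 by omega
  by_contra! hn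
  obtain ⟨y, hy1, -, hy⟩ := hinv (n - 1) (by omega) le_rfl
  obtain rfl | hy2 := hy1.eq_or_lt
  · rw [hπ, mul_one, if_pos le_rfl] at hy
    omega
  have hlarge : n - 1 < (n - 1) * y := lt_mul_right (by omega) hy2
  rw [hπ, if_neg hlarge.not_ge] at hy
  obtain ⟨rfl, hdvd⟩ := Nat.eq_one_and_dvd_sub_one_of_add_sub_mod_eq_one hi1 (by omega) hy
  have := Nat.eq_one_of_dvd_mul_sub_one (by omega) hdvd
  omega

/-- If the prime semiring `B(n,i)` is a semifield then `n = 2` and `i = 1`.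
Here `π k = k` for `k ≤ n - 1` and `π k = i + (k - i) % (n - i)` otherwise, and the
semifield hypothesis states that every nonzero element of `{0, …, n-1}` has a
multiplicative inverse for the product `x · y := π (x * y)`. -/
theorem Bni_semifield (n i : ℕ) (hn : 2 ≤ n) (hi1 : 1 ≤ i) (hi2 : i ≤ n - 1)
    (π : ℕ → ℕ) (hπ : ∀ k, π k = if k ≤ n - 1 then k else i + (k - i) % (n - i))
    (hinv : ∀ x, 1 ≤ x → x ≤ n - 1 → ∃ y, 1 ≤ y ∧ y ≤ n - 1 ∧ π (x * y) = 1) :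
    n = 2 ∧ i = 1 :=
  Bni_semifield_general n i hi1 hi2 π hπ hinv
end

section
/- Let a > 0. The function f(s, a) = a^s · ∫_a^∞ e^{iu} u^{-s-1} du, initially defined for Re(s) > 0, satisfies the functional equation a·f(s,a) = -i(s+1)·f(s+1,a) + i·e^{ia}, and consequently extends to an entire function of s ∈ ℂ. -/
open Complex MeasureTheory

/-!
Integrating by parts against `d(-i e^{iu}) = e^{iu} du` gives
`∫_a^∞ e^{iu} u^w du = i e^{ia} a^w + i w ∫_a^∞ e^{iu} u^{w-1} du` for `Re w < -1`, which at
`w = -s - 1` is the functional equation. On `Re s > 0` the function `f(·, a)` is a Mellin transform,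
hence holomorphic; solving the functional equation for `f(s, a)` expresses it through `f(s + 1, a)`
with entire coefficients, and iterating this continues `f(·, a)` half-plane by half-plane to `ℂ`.
-/

section ShiftRecurrence

variable {E : Type*} [NormedAddCommGroup E] [NormedSpace ℂ E]

/-- `F` continued from `{c < re}` to `{c - n < re}` by unrolling `F s = p s • F (s + 1) + q s`
`n` times. -/
noncomputable def shiftRecurrenceIterate (F : ℂ → E) (p : ℂ → ℂ) (q : ℂ → E) : ℕ → ℂ → E
  | 0 => F
  | n + 1 => fun s => p s • shiftRecurrenceIterate F p q n (s + 1) + q s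

variable {F : ℂ → E} {p : ℂ → ℂ} {q : ℂ → E} {c : ℝ}

theorem differentiableOn_shiftRecurrenceIterate (hF : DifferentiableOn ℂ F {s | c < s.re})
    (hp : Differentiable ℂ p) (hq : Differentiable ℂ q) :
    ∀ n : ℕ, DifferentiableOn ℂ (shiftRecurrenceIterate F p q n) {s | c - n < s.re}
  | 0 => by simpa [shiftRecurrenceIterate] using hF
  | n + 1 => by
    have hshift : DifferentiableOn ℂ (fun s => shiftRecurrenceIterate F p q n (s + 1))
        {s | c - (n + 1 : ℕ) < s.re} :=
      (differentiableOn_shiftRecurrenceIterate hF hp hq n).comp (by fun_prop) fun s hs => by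
        simp only [Set.mem_ofPred_eq, add_re, one_re, Nat.cast_add, Nat.cast_one] at hs ⊢
        linarith
    exact (hp.differentiableOn.smul hshift).add hq.differentiableOn

theorem shiftRecurrenceIterate_succ_eqOn (hrec : ∀ s, c < s.re → F s = p s • F (s + 1) + q s) :
    ∀ n : ℕ, Set.EqOn (shiftRecurrenceIterate F p q (n + 1)) (shiftRecurrenceIterate F p q n)
      {s | c - n < s.re}
  | 0 => fun s hs => (hrec s (by simpa using hs)).symm
  | n + 1 => fun s hs => by
    have hs' : c - n < (s + 1).re := by
      simp only [Set.mem_ofPred_eq, add_re, one_re, Nat.cast_add, Nat.cast_one] at hs ⊢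
      linarith
    exact congrArg (p s • · + q s) (shiftRecurrenceIterate_succ_eqOn hrec n hs')

theorem shiftRecurrenceIterate_eqOn_of_le (hrec : ∀ s, c < s.re → F s = p s • F (s + 1) + q s)
    {m n : ℕ} (hnm : n ≤ m) :
    Set.EqOn (shiftRecurrenceIterate F p q m) (shiftRecurrenceIterate F p q n)
      {s | c - n < s.re} := by
  induction m, hnm using Nat.le_induction with
  | base => exact Set.eqOn_refl _ _
  | succ m hnm ih =>
    refine fun s hs => (shiftRecurrenceIterate_succ_eqOn hrec m ?_).trans (ih hs)
    simp only [Set.mem_ofPred_eq] at hs ⊢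
    linarith [(Nat.cast_le (α := ℝ)).2 hnm]

theorem exists_differentiable_eqOn_of_shift_recurrence (hF : DifferentiableOn ℂ F {s | c < s.re})
    (hp : Differentiable ℂ p) (hq : Differentiable ℂ q)
    (hrec : ∀ s, c < s.re → F s = p s • F (s + 1) + q s) :
    ∃ G : ℂ → E, Differentiable ℂ G ∧ ∀ s, c < s.re → G s = F s := by
  let N : ℂ → ℕ := fun s => ⌊c - s.re⌋₊ + 1
  have hN : ∀ s : ℂ, c - N s < s.re := fun s => by
    have := Nat.lt_floor_add_one (c - s.re)
    push_cast [N]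
    linarith
  let G : ℂ → E := fun s => shiftRecurrenceIterate F p q (N s) s
  have hG : ∀ n : ℕ, Set.EqOn G (shiftRecurrenceIterate F p q n) {s | c - n < s.re} :=
    fun n s hs =>
      (shiftRecurrenceIterate_eqOn_of_le hrec (le_max_left (N s) n) (hN s)).symm.trans
        (shiftRecurrenceIterate_eqOn_of_le hrec (le_max_right (N s) n) hs)
  refine ⟨G, fun s => ?_, fun s hs => hG 0 (by simpa using hs)⟩
  have hopen : IsOpen {z : ℂ | c - N s < z.re} := isOpen_lt continuous_const continuous_re
  refine ((differentiableOn_shiftRecurrenceIterate hF hp hq (N s)).differentiableAt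
    (hopen.mem_nhds (hN s))).congr_of_eventuallyEq ?_
  filter_upwards [hopen.mem_nhds (hN s)] with z hz using hG (N s) hz

end ShiftRecurrence

section OscillatoryTail

variable {a : ℝ}

theorem integrableOn_Ioi_exp_I_mul_cpow (ha : 0 < a) {w : ℂ} (hw : w.re < -1) :
    IntegrableOn (fun u : ℝ => exp (I * u) * (u : ℂ) ^ w) (Set.Ioi a) :=
  (integrableOn_Ioi_cpow_of_lt hw ha).bdd_mul (c := 1)
    (by fun_prop : Continuous fun u : ℝ => exp (I * u)).aestronglyMeasurable
    (.of_forall fun u => (norm_exp_I_mul_ofReal u).le)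

theorem hasDerivAt_neg_I_mul_exp_I_mul_cpow (w : ℂ) {x : ℝ} (hx : 0 < x) :
    HasDerivAt (fun u : ℝ => -I * (exp (I * u) * (u : ℂ) ^ w))
      (exp (I * x) * (x : ℂ) ^ w - I * w * (exp (I * x) * (x : ℂ) ^ (w - 1))) x := by
  have hexp : HasDerivAt (fun u : ℝ => exp (I * u)) (exp (I * x) * I) x := by
    simpa [mul_comm] using (((hasDerivAt_id (x : ℂ)).const_mul I).cexp).comp_ofReal
  have hcpow : HasDerivAt (fun u : ℝ => (u : ℂ) ^ w) (w * (x : ℂ) ^ (w - 1)) x := by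
    simpa using
      ((hasDerivAt_id (x : ℂ)).cpow_const (c := w) (ofReal_mem_slitPlane.2 hx)).comp_ofReal
  refine ((hexp.mul hcpow).const_mul (-I)).congr_deriv ?_
  linear_combination (-Complex.exp (I * x) * (x : ℂ) ^ w) * I_mul_I

theorem tendsto_exp_I_mul_cpow_atTop {w : ℂ} (hw : w.re < 0) :
    Filter.Tendsto (fun u : ℝ => exp (I * u) * (u : ℂ) ^ w) Filter.atTop (nhds 0) := by
  rw [tendsto_zero_iff_norm_tendsto_zero]
  refine (tendsto_rpow_neg_atTop (y := -w.re) (by linarith)).congr' ?_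
  filter_upwards [Filter.eventually_gt_atTop 0] with u hu
  rw [norm_mul, norm_exp_I_mul_ofReal, norm_cpow_eq_rpow_re_of_pos hu, one_mul, neg_neg]

theorem integral_Ioi_exp_I_mul_cpow (ha : 0 < a) {w : ℂ} (hw : w.re < -1) :
    ∫ u in Set.Ioi a, exp (I * u) * (u : ℂ) ^ w =
      I * exp (I * a) * (a : ℂ) ^ w +
        I * w * ∫ u in Set.Ioi a, exp (I * u) * (u : ℂ) ^ (w - 1) := by
  have hint := integrableOn_Ioi_exp_I_mul_cpow ha hw
  have hint' := integrableOn_Ioi_exp_I_mul_cpow ha (w := w - 1) (by rw [sub_re, one_re]; linarith)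
  have hFTC := integral_Ioi_of_hasDerivAt_of_tendsto'
    (fun x hx => hasDerivAt_neg_I_mul_exp_I_mul_cpow w (ha.trans_le hx))
    (hint.sub (hint'.const_mul (I * w)))
    ((tendsto_exp_I_mul_cpow_atTop (w := w) (by linarith)).const_mul (-I))
  rw [integral_sub hint (hint'.const_mul _), integral_const_mul] at hFTC
  linear_combination hFTC

end OscillatoryTail

theorem mellin_indicator_Ioi {E : Type*} [NormedAddCommGroup E] [NormedSpace ℂ E] {a : ℝ}
    (ha : 0 ≤ a) (g : ℝ → E) (s : ℂ) :
    mellin ((Set.Ioi a).indicator g) s = ∫ u in Set.Ioi a, (u : ℂ) ^ (s - 1) • g u := by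
  simp_rw [mellin, ← Set.indicator_smul]
  rw [setIntegral_indicator measurableSet_Ioi, Set.Ioi_inter_Ioi, max_eq_right ha]

theorem mellin_indicator_Ioi_differentiableAt {E : Type*} [NormedAddCommGroup E] [NormedSpace ℂ E]
    {a : ℝ} (ha : 0 < a) {g : ℝ → E} (hg : Continuous g) {C : ℝ} (hg_bdd : ∀ u, ‖g u‖ ≤ C)
    {s : ℂ} (hs : s.re < 0) :
    DifferentiableAt ℂ (mellin ((Set.Ioi a).indicator g)) s := by
  refine mellin_differentiableAt_of_isBigO_rpow (a := 0) (b := s.re - 1)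
    ((hg.locallyIntegrable.indicator measurableSet_Ioi).locallyIntegrableOn _) ?_ hs ?_
    (by linarith)
  · refine Asymptotics.IsBigO.of_bound C (.of_forall fun u => ?_)
    simpa using (norm_indicator_le_norm_self g u).trans (hg_bdd u)
  · refine (Asymptotics.isBigO_zero _ _).congr' ?_ .rfl
    filter_upwards [Ioo_mem_nhdsGT ha] with u hu
    exact (Set.indicator_of_notMem (not_lt.2 hu.2.le) g).symm

/-- The paper's `f(s, a)`. -/
noncomputable def expCpowTail (a : ℝ) (s : ℂ) : ℂ :=
  (a : ℂ) ^ s * ∫ u in Set.Ioi a, exp (I * u) * (u : ℂ) ^ (-s - 1)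

section ExpCpowTail

variable {a : ℝ}

theorem expCpowTail_eq_mellin (ha : 0 < a) (s : ℂ) :
    expCpowTail a s =
      (a : ℂ) ^ s * mellin ((Set.Ioi a).indicator fun u : ℝ => exp (I * u)) (-s) := by
  rw [expCpowTail, mellin_indicator_Ioi ha.le]
  simp only [smul_eq_mul, mul_comm]

theorem differentiableOn_expCpowTail (ha : 0 < a) :
    DifferentiableOn ℂ (expCpowTail a) {s | 0 < s.re} := fun s hs => by
  have hmellin := mellin_indicator_Ioi_differentiableAt (g := fun u : ℝ => exp (I * u)) (s := -s)
    ha (by fun_prop) (fun u => (norm_exp_I_mul_ofReal u).le) (by simpa using hs)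
  have hpow : DifferentiableAt ℂ (fun z : ℂ => (a : ℂ) ^ z) s :=
    differentiableAt_id.const_cpow (.inl (ofReal_ne_zero.2 ha.ne'))
  exact ((hpow.mul (hmellin.comp s (differentiable_neg s))).congr_of_eventuallyEq
    (.of_forall fun z => expCpowTail_eq_mellin ha z)).differentiableWithinAt

theorem mul_expCpowTail (ha : 0 < a) {s : ℂ} (hs : 0 < s.re) :
    a * expCpowTail a s = -I * (s + 1) * expCpowTail a (s + 1) + I * exp (I * a) := by
  have ha' : (a : ℂ) ≠ 0 := ofReal_ne_zero.2 ha.ne'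
  have hparts := integral_Ioi_exp_I_mul_cpow ha (w := -s - 1)
    (by rw [sub_re, neg_re, one_re]; linarith)
  have hsucc : (a : ℂ) ^ (s + 1) = (a : ℂ) ^ s * a := by rw [cpow_add _ _ ha', cpow_one]
  have hpow : (a : ℂ) ^ s * a * (a : ℂ) ^ (-s - 1) = 1 := by
    rw [← hsucc, ← cpow_add _ _ ha', show s + 1 + (-s - 1) = 0 by ring, cpow_zero]
  rw [expCpowTail, expCpowTail, hparts, hsucc, show -s - 1 - 1 = -(s + 1) - 1 by ring]
  linear_combination (I * exp (I * a)) * hpow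

end ExpCpowTail

/-- The function `f(s,a) = a^s ∫_a^∞ e^{iu} u^{-s-1} du`, defined for `Re s > 0`, satisfies
`a f(s,a) = -i(s+1) f(s+1,a) + i e^{ia}` and extends to an entire function of `s`. -/
theorem f_functional_equation_and_entire (a : ℝ) (ha : 0 < a) :
    (∀ s : ℂ, 0 < s.re →
      (a : ℂ) * ((a : ℂ) ^ s * ∫ u in Set.Ioi a, Complex.exp (Complex.I * u) * (u : ℂ) ^ (-s - 1)) =
        -Complex.I * (s + 1) *
            ((a : ℂ) ^ (s + 1) *
              ∫ u in Set.Ioi a, Complex.exp (Complex.I * u) * (u : ℂ) ^ (-(s + 1) - 1)) +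
          Complex.I * Complex.exp (Complex.I * a)) ∧
    ∃ g : ℂ → ℂ, Differentiable ℂ g ∧
      ∀ s : ℂ, 0 < s.re →
        g s = (a : ℂ) ^ s * ∫ u in Set.Ioi a, Complex.exp (Complex.I * u) * (u : ℂ) ^ (-s - 1) := by
  have ha' : (a : ℂ) ≠ 0 := ofReal_ne_zero.2 ha.ne'
  refine ⟨fun s hs => mul_expCpowTail ha hs, ?_⟩
  refine exists_differentiable_eqOn_of_shift_recurrence (differentiableOn_expCpowTail ha)
    (p := fun s => -I * (s + 1) / a) (q := fun _ => I * exp (I * a) / a) (by fun_prop) (by fun_prop)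
    fun s hs => ?_
  show expCpowTail a s = (-I * (s + 1) / a) • expCpowTail a (s + 1) + I * exp (I * a) / a
  rw [smul_eq_mul, div_mul_eq_mul_div, ← add_div, eq_div_iff ha', ← mul_expCpowTail ha hs,
    mul_comm]
end
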